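/- arXiv:1702.08017 — 3 statements merged into one kernel-verified Lean document; each statement's English description precedes it below -/
import Mathlib

section
/- A weighted finite automaton A = ⟨Σ, V, α, β, {τ_σ}_{σ∈Σ}⟩ is irreducible (i.e., the only linear subspaces W ⊆ V with τ_σ(W) ⊆ W for all σ ∈ Σ are {0} and V) if and only if for every v ∈ V with v ≠ 0 and every linear form w ∈ V* with w ≠ 0, the automaton A_v^w obtained from A by replacing the initial vector with v and the final form with w is minimal. -/
open Filter Topology ENNReal

noncomputable section

/-- For a finite string `x = x₁⋯x_t`, `wordMap τ x = τ_{x_t} ∘ ⋯ ∘ τ_{x_1}`. -/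
def wordMap {Sig : Type*} {V : Type*} [AddCommGroup V] [Module ℝ V]
    (τ : Sig → V →ₗ[ℝ] V) : List Sig → V →ₗ[ℝ] V
  | [] => LinearMap.id
  | σ :: x => (wordMap τ x).comp (τ σ)

/-- The length-`t` prefix of an infinite string `x ∈ Σ^∞`. -/
def strPrefix {Sig : Type*} (x : ℕ → Sig) (t : ℕ) : List Sig :=
  List.ofFn fun i : Fin t => x i

/-- The joint spectral radius of the family of transition maps of a WFA. -/
def jsr {Sig : Type*} [Fintype Sig] {V : Type*} [NormedAddCommGroup V]
    [NormedSpace ℝ V] [FiniteDimensional ℝ V] (τ : Sig → V →ₗ[ℝ] V) : ℝ :=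
  Filter.limsup (fun t : ℕ =>
    (⨆ x : Fin t → Sig, ‖LinearMap.toContinuousLinearMap (wordMap τ (List.ofFn x))‖)
      ^ ((1 : ℝ) / t)) Filter.atTop

/-- A WFA `⟨Σ, V, v, w, {τ_σ}⟩` is minimal: every WFA over the same alphabet computing
the same function has dimension at least `dim V`. -/
def IsMinimalWFA {Sig : Type*} {V : Type*} [AddCommGroup V] [Module ℝ V]
    (v : V) (w : V →ₗ[ℝ] ℝ) (τ : Sig → V →ₗ[ℝ] V) : Prop :=
  ∀ (V' : Type) [AddCommGroup V'] [Module ℝ V'] [FiniteDimensional ℝ V']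
    (α' : V') (β' : V' →ₗ[ℝ] ℝ) (τ' : Sig → V' →ₗ[ℝ] V'),
    (∀ x : List Sig, β' (wordMap τ' x α') = w (wordMap τ x v)) →
    Module.finrank ℝ V ≤ Module.finrank ℝ V'

lemma wordMap_append {Sig : Type*} {V : Type*} [AddCommGroup V] [Module ℝ V]
    (τ : Sig → V →ₗ[ℝ] V) (x y : List Sig) :
    wordMap τ (x ++ y) = (wordMap τ y).comp (wordMap τ x) := by
  induction x with
  | nil => simp [wordMap]
  | cons σ x ih =>
      show wordMap τ (σ :: (x ++ y)) = _
      rw [wordMap, ih, wordMap, LinearMap.comp_assoc]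

lemma wordMap_mem {Sig : Type*} {V : Type*} [AddCommGroup V] [Module ℝ V]
    (τ : Sig → V →ₗ[ℝ] V) (W : Submodule ℝ V) (hW : ∀ σ : Sig, ∀ v ∈ W, τ σ v ∈ W)
    (x : List Sig) : ∀ v ∈ W, wordMap τ x v ∈ W := by
  induction x with
  | nil => intro v hv; simpa [wordMap] using hv
  | cons σ x ih =>
      intro v hv
      show wordMap τ x (τ σ v) ∈ W
      exact ih _ (hW σ v hv)

/-- A WFA is irreducible iff `A_v^w` is minimal for every
nonzero `v ∈ V` and nonzero `w ∈ V*`. -/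
theorem stmt6 {Sig : Type*} [Fintype Sig] [Nonempty Sig]
    {V : Type*} [AddCommGroup V] [Module ℝ V] [FiniteDimensional ℝ V]
    (α : V) (β : V →ₗ[ℝ] ℝ) (τ : Sig → V →ₗ[ℝ] V) :
    (∀ W : Submodule ℝ V, (∀ σ : Sig, ∀ v ∈ W, τ σ v ∈ W) → W = ⊥ ∨ W = ⊤) ↔
      ∀ v : V, v ≠ 0 → ∀ w : V →ₗ[ℝ] ℝ, w ≠ 0 → IsMinimalWFA v w τ := by
  constructor
  · intro hirr v hv w hw V' _ _ _ α' β' τ' hfun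
    -- the "observability" map
    set j : V →ₗ[ℝ] (List Sig → ℝ) :=
      LinearMap.pi (fun x : List Sig => w.comp (wordMap τ x)) with hj
    have hjapp : ∀ u x, j u x = w (wordMap τ x u) := fun u x => rfl
    -- kernel of j is invariant
    have hkerinv : ∀ σ : Sig, ∀ u ∈ LinearMap.ker j, τ σ u ∈ LinearMap.ker j := by
      intro σ u hu
      rw [LinearMap.mem_ker] at hu ⊢
      funext x
      have := congrFun hu (σ :: x)
      simpa [hjapp, wordMap] using this
    have hker : LinearMap.ker j = ⊥ := by
      rcases hirr _ hkerinv with h | h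
      · exact h
      · exfalso; apply hw
        ext u
        have hu : u ∈ LinearMap.ker j := h ▸ Submodule.mem_top
        rw [LinearMap.mem_ker] at hu
        have := congrFun hu []
        simpa [hjapp, wordMap] using this
    have hjinj : Function.Injective j := LinearMap.ker_eq_bot.mp hker
    -- the reachability space is everything
    set R : Submodule ℝ V :=
      Submodule.span ℝ (Set.range fun x : List Sig => wordMap τ x v) with hR
    have hRinv : ∀ σ : Sig, ∀ u ∈ R, τ σ u ∈ R := by
      intro σ u hu
      induction hu using Submodule.span_induction with
      | mem u hu =>
          obtain ⟨x, rfl⟩ := hu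
          apply Submodule.subset_span
          refine ⟨x ++ [σ], ?_⟩
          show wordMap τ (x ++ [σ]) v = τ σ (wordMap τ x v)
          rw [wordMap_append]
          simp [wordMap]
      | zero => simp
      | add a b _ _ ha hb => rw [map_add]; exact R.add_mem ha hb
      | smul c a _ ha => rw [map_smul]; exact R.smul_mem c ha
    have hRtop : R = ⊤ := by
      rcases hirr _ hRinv with h | h
      · exfalso; apply hv
        have : v ∈ R := Submodule.subset_span ⟨[], rfl⟩
        simpa [wordMap, h] using this
      · exact h
    -- the corresponding map for the other automaton
    set F : V' →ₗ[ℝ] (List Sig → ℝ) :=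
      LinearMap.pi (fun x : List Sig => β'.comp (wordMap τ' x)) with hF
    have key : ∀ u : V, j u ∈ LinearMap.range F := by
      intro u
      have hu : u ∈ R := hRtop ▸ Submodule.mem_top
      induction hu using Submodule.span_induction with
      | mem u hu =>
          obtain ⟨y, rfl⟩ := hu
          refine ⟨wordMap τ' y α', ?_⟩
          funext x
          show β' (wordMap τ' x (wordMap τ' y α')) = w (wordMap τ x (wordMap τ y v))
          have h1 : wordMap τ' x (wordMap τ' y α') = wordMap τ' (y ++ x) α' := by
            rw [wordMap_append]; rfl
          have h2 : wordMap τ x (wordMap τ y v) = wordMap τ (y ++ x) v := by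
            rw [wordMap_append]; rfl
          rw [h1, h2, hfun]
      | zero => rw [map_zero]; exact (LinearMap.range F).zero_mem
      | add a b _ _ ha hb => rw [map_add]; exact (LinearMap.range F).add_mem ha hb
      | smul c a _ ha => rw [map_smul]; exact (LinearMap.range F).smul_mem c ha
    have hco : Function.Injective (j.codRestrict (LinearMap.range F) key) := by
      intro a b hab
      apply hjinj
      have := congrArg Subtype.val hab
      simpa using this
    calc Module.finrank ℝ V ≤ Module.finrank ℝ (LinearMap.range F) :=
          LinearMap.finrank_le_finrank_of_injective hco
      _ ≤ Module.finrank ℝ V' := LinearMap.finrank_range_le F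
  · intro hmin W hWinv
    by_cases hbot : W = ⊥
    · exact Or.inl hbot
    right
    by_contra htop
    -- pick a nonzero vector in W
    obtain ⟨v, hvW, hv⟩ := Submodule.exists_mem_ne_zero_of_ne_bot hbot
    -- pick a nonzero functional vanishing on W
    have hlt : W < ⊤ := lt_top_iff_ne_top.mpr htop
    obtain ⟨u, hu⟩ := SetLike.exists_of_lt hlt
    have huW : u ∉ W := hu.2
    have hz : W.mkQ u ≠ 0 := by
      intro h
      exact huW ((Submodule.Quotient.mk_eq_zero W).mp h)
    obtain ⟨g, hg⟩ : ∃ g : (V ⧸ W) →ₗ[ℝ] ℝ, g (W.mkQ u) ≠ 0 := by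
      by_contra hc; push_neg at hc
      exact hz ((Module.forall_dual_apply_eq_zero_iff ℝ _).mp hc)
    set w : V →ₗ[ℝ] ℝ := g.comp W.mkQ with hwdef
    have hw : w ≠ 0 := by
      intro h
      apply hg
      have := congrFun (congrArg (fun f : V →ₗ[ℝ] ℝ => (f : V → ℝ)) h) u
      simpa [hwdef] using this
    -- apply minimality with the trivial automaton
    have hmin' := hmin v hv w hw PUnit 0 0 (fun _ => 0) ?_
    · have : Module.finrank ℝ V ≤ 0 := by
        calc Module.finrank ℝ V ≤ Module.finrank ℝ PUnit := hmin'
          _ = 0 := Module.finrank_zero_of_subsingleton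
      have hsub : Module.finrank ℝ V = 0 := Nat.le_zero.mp this
      have : Subsingleton V := Module.finrank_zero_iff.mp hsub
      exact hv (Subsingleton.elim v 0)
    · intro x
      have hmem : wordMap τ x v ∈ W := wordMap_mem τ W hWinv x v hvW
      have : w (wordMap τ x v) = 0 := by
        show g (W.mkQ (wordMap τ x v)) = 0
        have h0 : W.mkQ (wordMap τ x v) = 0 := by
          simpa using (Submodule.Quotient.mk_eq_zero W).mpr hmem
        rw [h0, map_zero]
      simp [this]
end
end

section
/- Let A = ⟨Σ, V, α, β, {τ_σ}⟩ and A' = ⟨Σ, V, α', β', {τ'_σ}⟩ be weighted finite automata over the same alphabet Σ and same space V. Let γ > 0 and suppose ‖·‖ is a norm on V such that ‖τ_σ‖ ≤ θ and ‖τ'_σ‖ ≤ θ for all σ ∈ Σ, where ν := γθ < 1. Then sup_{x∈Σ^∞} Σ_{t=0}^∞ γ^t |f_A(x_{≤t}) − f_{A'}(x_{≤t})| ≤ (‖α‖·‖β − β'‖_* + ‖β'‖_*·‖α − α'‖)/(1 − ν) + γ·‖α‖·‖β'‖_*·max_{σ∈Σ}‖τ_σ − τ'_σ‖ / (1 − ν)².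 -/
open Filter Topology ENNReal

noncomputable section

section Aux

variable {Sig : Type*} {V : Type*} [NormedAddCommGroup V] [NormedSpace ℝ V]
  [FiniteDimensional ℝ V]

lemma toCLM_comp (f g : V →ₗ[ℝ] V) :
    LinearMap.toContinuousLinearMap (f.comp g) =
      (LinearMap.toContinuousLinearMap f).comp (LinearMap.toContinuousLinearMap g) := by
  ext x; rfl

lemma wordMap_norm_le {τ : Sig → V →ₗ[ℝ] V} {θ : ℝ}
    (hτ : ∀ σ, ‖LinearMap.toContinuousLinearMap (τ σ)‖ ≤ θ) :
    ∀ l : List Sig, ‖LinearMap.toContinuousLinearMap (wordMap τ l)‖ ≤ θ ^ l.length := by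
  intro l
  induction l with
  | nil =>
    simp only [wordMap, List.length_nil, pow_zero]
    have : LinearMap.toContinuousLinearMap (LinearMap.id : V →ₗ[ℝ] V) =
        ContinuousLinearMap.id ℝ V := by ext x; rfl
    rw [this]
    exact ContinuousLinearMap.norm_id_le
  | cons σ l ih =>
    have hθ0 : 0 ≤ θ := (norm_nonneg _).trans (hτ σ)
    calc ‖LinearMap.toContinuousLinearMap (wordMap τ (σ :: l))‖
        ≤ ‖LinearMap.toContinuousLinearMap (wordMap τ l)‖ *
            ‖LinearMap.toContinuousLinearMap (τ σ)‖ := by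
          rw [show wordMap τ (σ :: l) = (wordMap τ l).comp (τ σ) from rfl, toCLM_comp]
          exact ContinuousLinearMap.opNorm_comp_le _ _
      _ ≤ θ ^ l.length * θ := by
          exact mul_le_mul ih (hτ σ) (norm_nonneg _) (pow_nonneg hθ0 _)
      _ = θ ^ (σ :: l).length := by rw [List.length_cons, pow_succ]

lemma wordMap_sub_norm_le {τ τ' : Sig → V →ₗ[ℝ] V} {θ Δ : ℝ}
    (hτ : ∀ σ, ‖LinearMap.toContinuousLinearMap (τ σ)‖ ≤ θ)
    (hτ' : ∀ σ, ‖LinearMap.toContinuousLinearMap (τ' σ)‖ ≤ θ)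
    (hΔ : ∀ σ, ‖LinearMap.toContinuousLinearMap (τ σ - τ' σ)‖ ≤ Δ) :
    ∀ l : List Sig, ‖LinearMap.toContinuousLinearMap (wordMap τ l - wordMap τ' l)‖ ≤
      l.length * θ ^ (l.length - 1) * Δ := by
  intro l
  induction l with
  | nil => simp [wordMap]
  | cons σ l ih =>
    have hθ0 : 0 ≤ θ := (norm_nonneg _).trans (hτ σ)
    have hΔ0 : 0 ≤ Δ := (norm_nonneg _).trans (hΔ σ)
    have hsplit : wordMap τ (σ :: l) - wordMap τ' (σ :: l) =
        (wordMap τ l - wordMap τ' l).comp (τ σ) + (wordMap τ' l).comp (τ σ - τ' σ) := by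
      show (wordMap τ l).comp (τ σ) - (wordMap τ' l).comp (τ' σ) = _
      rw [LinearMap.sub_comp, LinearMap.comp_sub]
      abel
    have h1 : ‖LinearMap.toContinuousLinearMap ((wordMap τ l - wordMap τ' l).comp (τ σ))‖ ≤
        (l.length * θ ^ (l.length - 1) * Δ) * θ := by
      rw [toCLM_comp]
      exact (ContinuousLinearMap.opNorm_comp_le _ _).trans
        (mul_le_mul ih (hτ σ) (norm_nonneg _)
          (by positivity))
    have h2 : ‖LinearMap.toContinuousLinearMap ((wordMap τ' l).comp (τ σ - τ' σ))‖ ≤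
        θ ^ l.length * Δ := by
      rw [toCLM_comp]
      exact (ContinuousLinearMap.opNorm_comp_le _ _).trans
        (mul_le_mul (wordMap_norm_le hτ' l) (hΔ σ) (norm_nonneg _) (by positivity))
    have hmid : (l.length : ℝ) * θ ^ (l.length - 1) * Δ * θ ≤ l.length * θ ^ l.length * Δ := by
      cases l with
      | nil => simp
      | cons a m =>
        rw [List.length_cons, Nat.add_sub_cancel]
        exact le_of_eq (by rw [pow_succ]; ring)
    calc ‖LinearMap.toContinuousLinearMap (wordMap τ (σ :: l) - wordMap τ' (σ :: l))‖
        ≤ (l.length * θ ^ (l.length - 1) * Δ) * θ + θ ^ l.length * Δ := by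
          rw [hsplit, map_add]
          exact (norm_add_le _ _).trans (add_le_add h1 h2)
      _ ≤ l.length * θ ^ l.length * Δ + θ ^ l.length * Δ := by
          exact add_le_add hmid le_rfl
      _ = (σ :: l).length * θ ^ ((σ :: l).length - 1) * Δ := by
          rw [List.length_cons, Nat.add_sub_cancel]
          push_cast; ring

lemma hasSum_coe_mul_geo_pred {r : ℝ} (h0 : 0 ≤ r) (h1 : r < 1) :
    HasSum (fun n : ℕ => (n : ℝ) * r ^ (n - 1)) (1 / (1 - r) ^ 2) := by
  have h : ‖r‖ < 1 := by rwa [Real.norm_eq_abs, abs_of_nonneg h0]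
  have hne : (1 : ℝ) - r ≠ 0 := by linarith
  have h3 : HasSum (fun n : ℕ => ((n : ℝ) + 1) * r ^ n) (1 / (1 - r) ^ 2) := by
    convert (hasSum_coe_mul_geometric_of_norm_lt_one h).add
      (hasSum_geometric_of_lt_one h0 h1) using 1
    · rfl
    · funext n; ring
    · field_simp; ring
  refine (hasSum_nat_add_iff' (f := fun n : ℕ => (n : ℝ) * r ^ (n - 1)) 1).mp ?_
  convert h3 using 1
  · rfl
  · funext n; push_cast [Nat.add_sub_cancel]; ring
  · simp

end Aux

/-- **Lemma on bounding `d_γ`.** If `‖τ_σ‖, ‖τ'_σ‖ ≤ θ` with `ν = γθ < 1`,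
then `d_γ(A,A') ≤ (‖α‖‖β−β'‖_* + ‖β'‖_*‖α−α'‖)/(1−ν) + γ‖α‖‖β'‖_* max_σ ‖τ_σ−τ'_σ‖/(1−ν)²`. -/
theorem stmt12 {Sig : Type*} [Fintype Sig] [Nonempty Sig]
    {V : Type*} [NormedAddCommGroup V] [NormedSpace ℝ V] [FiniteDimensional ℝ V]
    (α α' : V) (β β' : V →ₗ[ℝ] ℝ) (τ τ' : Sig → V →ₗ[ℝ] V)
    (γ θ : ℝ) (hγ : 0 < γ)
    (hτ : ∀ σ : Sig, ‖LinearMap.toContinuousLinearMap (τ σ)‖ ≤ θ)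
    (hτ' : ∀ σ : Sig, ‖LinearMap.toContinuousLinearMap (τ' σ)‖ ≤ θ)
    (hν : γ * θ < 1) :
    (⨆ x : ℕ → Sig, ∑' t : ℕ,
        ENNReal.ofReal (γ ^ t * |β (wordMap τ (strPrefix x t) α) -
          β' (wordMap τ' (strPrefix x t) α')|)) ≤
      ENNReal.ofReal
        ((‖α‖ * ‖LinearMap.toContinuousLinearMap (β - β')‖ +
            ‖LinearMap.toContinuousLinearMap β'‖ * ‖α - α'‖) / (1 - γ * θ) +
          γ * ‖α‖ * ‖LinearMap.toContinuousLinearMap β'‖ *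
            (⨆ σ : Sig, ‖LinearMap.toContinuousLinearMap (τ σ - τ' σ)‖) / (1 - γ * θ) ^ 2) := by
  have hθ0 : 0 ≤ θ := (norm_nonneg _).trans (hτ (Classical.arbitrary Sig))
  set ν := γ * θ with hνdef
  have hν0 : 0 ≤ ν := mul_nonneg hγ.le hθ0
  have hν1 : (0 : ℝ) < 1 - ν := by linarith
  set Δ := ⨆ σ : Sig, ‖LinearMap.toContinuousLinearMap (τ σ - τ' σ)‖ with hΔdef
  have hΔ : ∀ σ, ‖LinearMap.toContinuousLinearMap (τ σ - τ' σ)‖ ≤ Δ := fun σ =>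
    le_ciSup (f := fun σ : Sig => ‖LinearMap.toContinuousLinearMap (τ σ - τ' σ)‖)
      (Set.Finite.bddAbove (Set.finite_range _)) σ
  have hΔ0 : 0 ≤ Δ := (norm_nonneg _).trans (hΔ (Classical.arbitrary Sig))
  set nβδ := ‖LinearMap.toContinuousLinearMap (β - β')‖ with hnβδ
  set nβ' := ‖LinearMap.toContinuousLinearMap β'‖ with hnβ'
  set C1 := ‖α‖ * nβδ + nβ' * ‖α - α'‖ with hC1
  set C2 := γ * ‖α‖ * nβ' * Δ with hC2
  have hC10 : 0 ≤ C1 := by positivity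
  have hC20 : 0 ≤ C2 := by positivity
  set g : ℕ → ℝ := fun t => C1 * ν ^ t + C2 * ((t : ℝ) * ν ^ (t - 1)) with hg
  have hg0 : ∀ t, 0 ≤ g t := fun t => by positivity
  have hG : HasSum g (C1 * (1 - ν)⁻¹ + C2 * (1 / (1 - ν) ^ 2)) :=
    ((hasSum_geometric_of_lt_one hν0 (by linarith)).mul_left C1).add
      ((hasSum_coe_mul_geo_pred hν0 (by linarith)).mul_left C2)
  -- pointwise bound
  have key : ∀ (x : ℕ → Sig) (t : ℕ),
      γ ^ t * |β (wordMap τ (strPrefix x t) α) - β' (wordMap τ' (strPrefix x t) α')| ≤ g t := by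
    intro x t
    set l := strPrefix x t with hl
    have hlen : l.length = t := by simp [hl, strPrefix]
    set M := wordMap τ l with hM
    set M' := wordMap τ' l with hM'
    have hMn : ‖LinearMap.toContinuousLinearMap M‖ ≤ θ ^ t := hlen ▸ wordMap_norm_le hτ l
    have hM'n : ‖LinearMap.toContinuousLinearMap M'‖ ≤ θ ^ t := hlen ▸ wordMap_norm_le hτ' l
    have hMM' : ‖LinearMap.toContinuousLinearMap (M - M')‖ ≤ t * θ ^ (t - 1) * Δ :=
      hlen ▸ wordMap_sub_norm_le hτ hτ' hΔ l
    have happ : ∀ (f : V →ₗ[ℝ] ℝ) (v : V),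
        |f v| ≤ ‖LinearMap.toContinuousLinearMap f‖ * ‖v‖ := fun f v => by
      rw [← Real.norm_eq_abs]
      exact (LinearMap.toContinuousLinearMap f).le_opNorm v
    have hvec : ∀ (F : V →ₗ[ℝ] V) (v : V),
        ‖F v‖ ≤ ‖LinearMap.toContinuousLinearMap F‖ * ‖v‖ := fun F v =>
      (LinearMap.toContinuousLinearMap F).le_opNorm v
    have hsplit : β (M α) - β' (M' α') =
        (β - β') (M α) + β' ((M - M') α) + β' (M' (α - α')) := by
      simp only [LinearMap.sub_apply, map_sub]
      ring
    have ha : |(β - β') (M α)| ≤ nβδ * (θ ^ t * ‖α‖) :=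
      (happ _ _).trans (by
        refine mul_le_mul_of_nonneg_left ?_ (norm_nonneg _)
        exact (hvec M α).trans (mul_le_mul_of_nonneg_right hMn (norm_nonneg _)))
    have hb : |β' ((M - M') α)| ≤ nβ' * (t * θ ^ (t - 1) * Δ * ‖α‖) :=
      (happ _ _).trans (by
        refine mul_le_mul_of_nonneg_left ?_ (norm_nonneg _)
        have : ((M - M') : V →ₗ[ℝ] V) α = (M - M') α := rfl
        exact (hvec (M - M') α).trans (mul_le_mul_of_nonneg_right hMM' (norm_nonneg _)))
    have hc : |β' (M' (α - α'))| ≤ nβ' * (θ ^ t * ‖α - α'‖) :=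
      (happ _ _).trans (by
        refine mul_le_mul_of_nonneg_left ?_ (norm_nonneg _)
        exact (hvec M' _).trans (mul_le_mul_of_nonneg_right hM'n (norm_nonneg _)))
    have habs : |β (M α) - β' (M' α')| ≤
        nβδ * (θ ^ t * ‖α‖) + nβ' * (t * θ ^ (t - 1) * Δ * ‖α‖) + nβ' * (θ ^ t * ‖α - α'‖) := by
      rw [hsplit]
      exact (abs_add_le _ _).trans (add_le_add ((abs_add_le _ _).trans (add_le_add ha hb)) hc)
    calc γ ^ t * |β (M α) - β' (M' α')|
        ≤ γ ^ t * (nβδ * (θ ^ t * ‖α‖) + nβ' * (t * θ ^ (t - 1) * Δ * ‖α‖) +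
            nβ' * (θ ^ t * ‖α - α'‖)) :=
          mul_le_mul_of_nonneg_left habs (by positivity)
      _ = g t := by
          cases t with
          | zero => simp [hg, hC1, hC2]; ring
          | succ s =>
            simp only [hg, hC1, hC2, hνdef, Nat.add_sub_cancel, mul_pow, pow_succ]
            push_cast
            ring
  -- assemble
  refine iSup_le fun x => ?_
  calc (∑' t : ℕ, ENNReal.ofReal (γ ^ t * |β (wordMap τ (strPrefix x t) α) -
          β' (wordMap τ' (strPrefix x t) α')|))
      ≤ ∑' t : ℕ, ENNReal.ofReal (g t) :=
        ENNReal.tsum_le_tsum fun t => ENNReal.ofReal_le_ofReal (key x t)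
    _ = ENNReal.ofReal (∑' t : ℕ, g t) :=
        (ENNReal.ofReal_tsum_of_nonneg hg0 hG.summable).symm
    _ = ENNReal.ofReal ((‖α‖ * nβδ + nβ' * ‖α - α'‖) / (1 - ν) +
          γ * ‖α‖ * nβ' * Δ / (1 - ν) ^ 2) := by
        rw [hG.tsum_eq]
        congr 1
        rw [hC1, hC2]
        field_simp
end
end

section
/- Let A = ⟨Σ, V, α, β, {τ_σ}_{σ∈Σ}⟩ be a weighted finite automaton, let γ > 0, and let ‖·‖ be a norm on V such that ‖τ_σ(v)‖ ≤ θ·‖v‖ for all σ ∈ Σ and v ∈ V. Then for all seminorms s, s' on V, sup_{‖v‖≤1} |F_{A,γ}(s)(v) − F_{A,γ}(s')(v)| ≤ γθ · sup_{‖v‖≤1} |s(v) − s'(v)|. In particular, if γθ < 1 then F_{A,γ} is a contraction on the space of seminorms with metric d(s,s') = sup_{‖v‖≤1}|s(v) − s'(v)|. -/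
open Filter Topology

noncomputable section

private lemma sem_sum_le' {V : Type*} [AddCommGroup V] [Module ℝ V] {ι : Type*}
    (s : Seminorm ℝ V) (t : Finset ι) (f : ι → V) :
    s (∑ i ∈ t, f i) ≤ ∑ i ∈ t, s (f i) := by
  classical
  induction t using Finset.cons_induction with
  | empty => simp
  | cons i t hi ih =>
    rw [Finset.sum_cons, Finset.sum_cons]
    exact (map_add_le_add s _ _).trans (add_le_add le_rfl ih)

private lemma sem_bound' {V : Type*} [NormedAddCommGroup V] [NormedSpace ℝ V]
    [FiniteDimensional ℝ V] (s : Seminorm ℝ V) :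
    ∃ C : ℝ, 0 ≤ C ∧ ∀ v, s v ≤ C * ‖v‖ := by
  classical
  set b := Module.finBasis ℝ V with hb
  refine ⟨∑ i, ‖LinearMap.toContinuousLinearMap (b.coord i)‖ * s (b i), ?_, ?_⟩
  · exact Finset.sum_nonneg fun i _ => mul_nonneg (norm_nonneg _) (apply_nonneg s _)
  · intro v
    have hv : (∑ i, b.repr v i • b i) = v := b.sum_repr v
    calc s v = s (∑ i, b.repr v i • b i) := by rw [hv]
      _ ≤ ∑ i, s (b.repr v i • b i) := sem_sum_le' s _ _
      _ ≤ ∑ i, ‖LinearMap.toContinuousLinearMap (b.coord i)‖ * s (b i) * ‖v‖ := by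
          refine Finset.sum_le_sum fun i _ => ?_
          rw [map_smul_eq_mul]
          have h1 : ‖b.repr v i‖ ≤ ‖LinearMap.toContinuousLinearMap (b.coord i)‖ * ‖v‖ := by
            have := (LinearMap.toContinuousLinearMap (b.coord i)).le_opNorm v
            simpa [Module.Basis.coord_apply] using this
          calc ‖b.repr v i‖ * s (b i)
              ≤ (‖LinearMap.toContinuousLinearMap (b.coord i)‖ * ‖v‖) * s (b i) :=
                mul_le_mul_of_nonneg_right h1 (apply_nonneg s _)
            _ = ‖LinearMap.toContinuousLinearMap (b.coord i)‖ * s (b i) * ‖v‖ := by ring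
      _ = (∑ i, ‖LinearMap.toContinuousLinearMap (b.coord i)‖ * s (b i)) * ‖v‖ :=
          (Finset.sum_mul _ _ _).symm

/-- If `‖τ_σ(v)‖ ≤ θ‖v‖`, then for all seminorms `s, s'`,
`sup_{‖v‖≤1} |F_{A,γ}(s)(v) − F_{A,γ}(s')(v)| ≤ γθ · sup_{‖v‖≤1} |s(v) − s'(v)|`;
in particular `F_{A,γ}` is a contraction when `γθ < 1`. -/
theorem stmt18 {Sig : Type*} [Fintype Sig] [Nonempty Sig]
    {V : Type*} [NormedAddCommGroup V] [NormedSpace ℝ V] [FiniteDimensional ℝ V]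
    (α : V) (β : V →ₗ[ℝ] ℝ) (τ : Sig → V →ₗ[ℝ] V)
    (γ θ : ℝ) (hγ : 0 < γ) (hτ : ∀ (σ : Sig) (v : V), ‖τ σ v‖ ≤ θ * ‖v‖)
    (s s' : Seminorm ℝ V) :
    (⨆ v : {v : V // ‖v‖ ≤ 1},
        |(|β v.1| + γ * ⨆ σ : Sig, s (τ σ v.1)) -
          (|β v.1| + γ * ⨆ σ : Sig, s' (τ σ v.1))|) ≤
      γ * θ * ⨆ v : {v : V // ‖v‖ ≤ 1}, |s v.1 - s' v.1| := by
  classical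
  haveI : Nonempty {v : V // ‖v‖ ≤ 1} := ⟨⟨0, by simp⟩⟩
  rcases subsingleton_or_nontrivial V with hV | hV
  · have h0 : ∀ v : {v : V // ‖v‖ ≤ 1}, v.1 = 0 := fun v => Subsingleton.elim _ _
    have e1 : (⨆ v : {v : V // ‖v‖ ≤ 1},
        |(|β v.1| + γ * ⨆ σ : Sig, s (τ σ v.1)) -
          (|β v.1| + γ * ⨆ σ : Sig, s' (τ σ v.1))|) = 0 := by
      have := iSup_congr (f := fun v : {v : V // ‖v‖ ≤ 1} =>
        |(|β v.1| + γ * ⨆ σ : Sig, s (τ σ v.1)) -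
          (|β v.1| + γ * ⨆ σ : Sig, s' (τ σ v.1))|) (g := fun _ => (0 : ℝ))
        (fun v => by simp [h0 v])
      rw [this, ciSup_const]
    have e2 : (⨆ v : {v : V // ‖v‖ ≤ 1}, |s v.1 - s' v.1|) = 0 := by
      have := iSup_congr (f := fun v : {v : V // ‖v‖ ≤ 1} => |s v.1 - s' v.1|)
        (g := fun _ => (0 : ℝ)) (fun v => by simp [h0 v])
      rw [this, ciSup_const]
    rw [e1, e2]; simp
  · obtain ⟨v₀, hv₀⟩ := exists_ne (0 : V)
    have hθ : 0 ≤ θ := by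
      have h := (norm_nonneg (τ (Classical.arbitrary Sig) v₀)).trans
        (hτ (Classical.arbitrary Sig) v₀)
      have hn : 0 < ‖v₀‖ := norm_pos_iff.mpr hv₀
      nlinarith
    obtain ⟨C, hC0, hC⟩ := sem_bound' s
    obtain ⟨C', hC'0, hC'⟩ := sem_bound' s'
    have hbdd : BddAbove (Set.range fun v : {v : V // ‖v‖ ≤ 1} => |s v.1 - s' v.1|) := by
      refine ⟨C + C', ?_⟩
      rintro _ ⟨v, rfl⟩
      have h1 : |s v.1 - s' v.1| ≤ s v.1 + s' v.1 := by
        have h := abs_sub (s v.1) (s' v.1)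
        rwa [abs_of_nonneg (apply_nonneg s _), abs_of_nonneg (apply_nonneg s' _)] at h
      exact h1.trans (by nlinarith [hC v.1, hC' v.1, v.2, norm_nonneg v.1])
    set D := ⨆ v : {v : V // ‖v‖ ≤ 1}, |s v.1 - s' v.1| with hD
    have hD0 : 0 ≤ D :=
      (abs_nonneg _).trans (le_ciSup hbdd (⟨0, by simp⟩ : {v : V // ‖v‖ ≤ 1}))
    have key : ∀ w : V, |s w - s' w| ≤ D * ‖w‖ := by
      intro w
      by_cases hw : w = 0
      · simp [hw]
      · have hnw : (0:ℝ) < ‖w‖ := norm_pos_iff.mpr hw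
        obtain ⟨u, hun, hwu⟩ : ∃ u : V, ‖u‖ = 1 ∧ w = ‖w‖ • u := by
          refine ⟨‖w‖⁻¹ • w, ?_, ?_⟩
          · rw [norm_smul, norm_inv, norm_norm, inv_mul_cancel₀ hnw.ne']
          · rw [smul_smul, mul_inv_cancel₀ hnw.ne', one_smul]
        have hle : |s u - s' u| ≤ D :=
          le_ciSup hbdd (⟨u, hun.le⟩ : {v : V // ‖v‖ ≤ 1})
        calc |s w - s' w| = |s (‖w‖ • u) - s' (‖w‖ • u)| := by rw [← hwu]
          _ = ‖w‖ * |s u - s' u| := by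
              rw [map_smul_eq_mul, map_smul_eq_mul, ← mul_sub, abs_mul, norm_norm,
                abs_of_nonneg hnw.le]
          _ ≤ ‖w‖ * D := mul_le_mul_of_nonneg_left hle hnw.le
          _ = D * ‖w‖ := mul_comm _ _
    refine ciSup_le fun v => ?_
    have hwb : ∀ σ : Sig, |s (τ σ v.1) - s' (τ σ v.1)| ≤ θ * D := by
      intro σ
      have h1 : ‖τ σ v.1‖ ≤ θ := (hτ σ v.1).trans (by nlinarith [v.2, norm_nonneg v.1])
      calc |s (τ σ v.1) - s' (τ σ v.1)| ≤ D * ‖τ σ v.1‖ := key _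
        _ ≤ D * θ := mul_le_mul_of_nonneg_left h1 hD0
        _ = θ * D := mul_comm _ _
    have hAB : |(⨆ σ : Sig, s (τ σ v.1)) - ⨆ σ : Sig, s' (τ σ v.1)| ≤ θ * D := by
      rw [abs_sub_le_iff]
      constructor
      · rw [sub_le_iff_le_add]
        refine ciSup_le fun σ => ?_
        have h1 := le_abs_self (s (τ σ v.1) - s' (τ σ v.1))
        have h2 := le_ciSup (Finite.bddAbove_range fun σ : Sig => s' (τ σ v.1)) σ
        have h3 := hwb σ
        linarith
      · rw [sub_le_iff_le_add]
        refine ciSup_le fun σ => ?_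
        have h1 := le_abs_self (s' (τ σ v.1) - s (τ σ v.1))
        have h2 := le_ciSup (Finite.bddAbove_range fun σ : Sig => s (τ σ v.1)) σ
        have h3 := (abs_sub_comm (s (τ σ v.1)) (s' (τ σ v.1))) ▸ hwb σ
        linarith
    calc |(|β v.1| + γ * ⨆ σ : Sig, s (τ σ v.1)) -
          (|β v.1| + γ * ⨆ σ : Sig, s' (τ σ v.1))|
        = γ * |(⨆ σ : Sig, s (τ σ v.1)) - ⨆ σ : Sig, s' (τ σ v.1)| := by
          rw [add_sub_add_left_eq_sub, ← mul_sub, abs_mul, abs_of_pos hγ]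
      _ ≤ γ * (θ * D) := mul_le_mul_of_nonneg_left hAB hγ.le
      _ = γ * θ * D := by ring
end
end
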